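/- Fix κ ≥ 0. If A ∈ C²(I, M²) satisfies det A(t) = 1 on an interval I and solves Ä(t) + κA(t) = λ(t)·cof A(t) on I for some continuous function λ, then the three quantities X₁(A(t),Ȧ(t)), X₂(A(t),Ȧ(t)), X₃(A(t),Ȧ(t)) are constant in t. -/

import Mathlib

open Matrix

noncomputable section

/-- `M²`: the space of 2×2 real matrices. -/
abbrev M2 : Type := Matrix (Fin 2) (Fin 2) ℝ

/-- Frobenius inner product `⟨A,B⟩ = tr(AᵀB)`. -/
def mip (A B : M2) : ℝ := (Aᵀ * B).trace

/-- Frobenius norm `|A| = ⟨A,A⟩^{1/2}`. -/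
def fnorm (A : M2) : ℝ := Real.sqrt (mip A A)

/-- The matrix Z = [[0,−1],[1,0]]. -/
def Zm : M2 := !![0, -1; 1, 0]

/-- The matrix K = [[1,0],[0,−1]]. -/
def Km : M2 := !![1, 0; 0, -1]

/-- The matrix M = [[0,1],[1,0]]. -/
def Mm : M2 := !![0, 1; 1, 0]

/-- Cofactor: cof [[a,b],[c,d]] = [[d,−c],[−b,a]]. -/
def cofm (A : M2) : M2 := !![A 1 1, -(A 1 0); -(A 0 1), A 0 0]

/-- Membership in SO(2,ℝ). -/
def isSO (U : M2) : Prop := U.det = 1 ∧ U⁻¹ = Uᵀ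

/-- The rotation U(θ) = cos θ·I + sin θ·Z. -/
def Um (θ : ℝ) : M2 := Real.cos θ • (1 : M2) + Real.sin θ • Zm

/-- Invariant X₁(A,B) = ½|B|² + (κ/2)|A|². -/
def X1 (κ : ℝ) (A B : M2) : ℝ := (1/2) * mip B B + (κ/2) * mip A A

/-- Invariant X₂(A,B) = ½⟨ZA − AZ, B⟩. -/
def X2 (A B : M2) : ℝ := (1/2) * mip (Zm * A - A * Zm) B

/-- Invariant X₃(A,B) = ½⟨ZA + AZ, B⟩. -/
def X3 (A B : M2) : ℝ := (1/2) * mip (Zm * A + A * Zm) B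

/-- Lagrange multiplier Λ(A,B) = 2(κ − det B)/|A|². -/
def Lam (κ : ℝ) (A B : M2) : ℝ := 2 * (κ - B.det) / (mip A A)

attribute [local instance] Matrix.normedAddCommGroup Matrix.normedSpace

/-!
Along a solution, `Ä + κA = λ cof A`, so each derivative reduces to pairings against `cof A`.
`⟨B, cof A⟩` is the derivative of `det A` in the direction `B`, hence `⟨Ȧ, cof A⟩ = 0`; this
kills the derivative of `X₁`. Since `cof A = (adj A)ᵀ`, `⟨ZA ± AZ, cof A⟩ = det A · tr Z = 0`,
and `⟨ZB ± BZ, B⟩ = 0` for every `B` because `Z` is skew; together these kill the derivatives of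
`X₂` and `X₃`.
-/

open Set Topology

theorem mip_comm (A B : M2) : mip A B = mip B A := by
  rw [mip, mip, ← trace_transpose, transpose_mul, transpose_transpose]

theorem mip_add_left (A B C : M2) : mip (A + B) C = mip A C + mip B C := by
  rw [mip, mip, mip, transpose_add, Matrix.add_mul, trace_add]

theorem mip_add_right (A B C : M2) : mip A (B + C) = mip A B + mip A C := by
  rw [mip, mip, mip, Matrix.mul_add, trace_add]

theorem mip_sub_left (A B C : M2) : mip (A - B) C = mip A C - mip B C := by
  rw [mip, mip, mip, transpose_sub, Matrix.sub_mul, trace_sub]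

theorem mip_sub_right (A B C : M2) : mip A (B - C) = mip A B - mip A C := by
  rw [mip, mip, mip, Matrix.mul_sub, trace_sub]

theorem mip_smul_right (c : ℝ) (A B : M2) : mip A (c • B) = c * mip A B := by
  rw [mip, mip, Matrix.mul_smul, trace_smul, smul_eq_mul]

theorem mip_transpose_right (A B : M2) : mip A Bᵀ = (B * A).trace := by
  rw [mip, trace_transpose_mul, trace_mul_comm]

theorem mip_eq_sum (A B : M2) : mip A B = ∑ i, ∑ j, A i j * B i j := by
  simp only [mip, trace, diag, mul_apply, transpose_apply]
  exact Finset.sum_comm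

theorem cofm_eq_transpose_adjugate (A : M2) : cofm A = (adjugate A)ᵀ := by
  ext i j; fin_cases i <;> fin_cases j <;> simp [cofm, adjugate_fin_two]

theorem mip_mul_left_cofm (M A : M2) : mip (M * A) (cofm A) = A.det * M.trace := by
  rw [cofm_eq_transpose_adjugate, mip_transpose_right, ← Matrix.mul_assoc, trace_mul_comm,
    ← Matrix.mul_assoc, mul_adjugate, smul_mul, Matrix.one_mul, trace_smul, smul_eq_mul]

theorem mip_mul_right_cofm (A M : M2) : mip (A * M) (cofm A) = A.det * M.trace := by
  rw [cofm_eq_transpose_adjugate, mip_transpose_right, ← Matrix.mul_assoc, adjugate_mul,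
    smul_mul, Matrix.one_mul, trace_smul, smul_eq_mul]

theorem mip_mul_self_of_transpose_eq_neg {M : M2} (hM : Mᵀ = -M) (B : M2) :
    mip (M * B) B = 0 := by
  have h : mip (M * B) B = -mip (M * B) B := by
    conv_rhs => rw [mip_comm]
    rw [mip, mip, transpose_mul, hM, Matrix.mul_neg, Matrix.neg_mul, trace_neg, Matrix.mul_assoc]
  linarith

theorem mip_self_mul_of_transpose_eq_neg {M : M2} (hM : Mᵀ = -M) (B : M2) :
    mip (B * M) B = 0 := by
  have h : mip (B * M) B = -mip (B * M) B := by
    conv_rhs => rw [mip_comm]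
    rw [mip, mip, transpose_mul, hM, Matrix.neg_mul, Matrix.neg_mul, trace_neg,
      ← Matrix.mul_assoc Bᵀ, trace_mul_cycle Bᵀ]
  linarith

theorem Zm_transpose : Zmᵀ = -Zm := by
  ext i j; fin_cases i <;> fin_cases j <;> simp [Zm]

theorem trace_Zm : Zm.trace = 0 := by
  simp [Zm, trace_fin_two]

theorem HasDerivAt.linearMap_comp {E F : Type*} [NormedAddCommGroup E] [NormedSpace ℝ E]
    [FiniteDimensional ℝ E] [NormedAddCommGroup F] [NormedSpace ℝ F] (L : E →ₗ[ℝ] F)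
    {f : ℝ → E} {f' : E} {t : ℝ} (hf : HasDerivAt f f' t) :
    HasDerivAt (fun s => L (f s)) (L f') t :=
  (LinearMap.toContinuousLinearMap L).hasFDerivAt.comp_hasDerivAt t hf

theorem eq_of_hasDerivAt_eq_zero_on_Ioo {G : Type*} [NormedAddCommGroup G] [NormedSpace ℝ G]
    {F : ℝ → G} {a b s t : ℝ} (hF : ∀ x ∈ Ioo a b, HasDerivAt F 0 x) (hs : s ∈ Ioo a b)
    (ht : t ∈ Ioo a b) : F s = F t :=
  isOpen_Ioo.is_const_of_deriv_eq_zero isPreconnected_Ioo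
    (fun x hx => (hF x hx).differentiableAt.differentiableWithinAt) (fun x hx => (hF x hx).deriv)
    hs ht

section Calculus

variable {f g : ℝ → M2} {f' g' : M2} {t : ℝ}

theorem HasDerivAt.entry (hf : HasDerivAt f f' t) (i j : Fin 2) :
    HasDerivAt (fun s => f s i j) (f' i j) t :=
  hasDerivAt_pi.mp (hasDerivAt_pi.mp hf i) j

theorem HasDerivAt.mip (hf : HasDerivAt f f' t) (hg : HasDerivAt g g' t) :
    HasDerivAt (fun s => mip (f s) (g s)) (mip f' (g t) + mip (f t) g') t := by
  simp only [mip_eq_sum, ← Finset.sum_add_distrib]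
  exact HasDerivAt.fun_sum fun i _ => HasDerivAt.fun_sum fun j _ =>
    (hf.entry i j).mul (hg.entry i j)

theorem HasDerivAt.det (hf : HasDerivAt f f' t) :
    HasDerivAt (fun s => (f s).det) (_root_.mip (cofm (f t)) f') t := by
  have hdet : (fun s => (f s).det) = fun s => f s 0 0 * f s 1 1 - f s 0 1 * f s 1 0 :=
    funext fun s => det_fin_two (f s)
  rw [hdet]
  refine (((hf.entry 0 0).mul (hf.entry 1 1)).sub
    ((hf.entry 0 1).mul (hf.entry 1 0))).congr_deriv ?_
  simp only [mip_eq_sum, cofm, Fin.sum_univ_two, of_apply, cons_val', cons_val_zero, cons_val_one,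
    empty_val', cons_val_fin_one]
  ring

theorem mip_cofm_eq_zero_of_eventually_det_eq {c : ℝ} (hf : HasDerivAt f f' t)
    (hdet : ∀ᶠ s in 𝓝 t, (f s).det = c) : mip (cofm (f t)) f' = 0 :=
  hf.det.unique ((hasDerivAt_const t c).congr_of_eventuallyEq hdet)

end Calculus

section Solution

variable {κ μ : ℝ} {A A' A'' : ℝ → M2} {t : ℝ}

theorem hasDerivAt_X1_eq_zero {c : ℝ} (hA : HasDerivAt A (A' t) t)
    (hA' : HasDerivAt A' (A'' t) t) (hdet : ∀ᶠ s in 𝓝 t, (A s).det = c)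
    (hode : A'' t + κ • A t = μ • cofm (A t)) :
    HasDerivAt (fun s => X1 κ (A s) (A' s)) 0 t := by
  refine (((hA'.mip hA').const_mul (1 / 2)).add ((hA.mip hA).const_mul (κ / 2))).congr_deriv ?_
  have hcof := mip_cofm_eq_zero_of_eventually_det_eq hA hdet
  calc 1 / 2 * (mip (A'' t) (A' t) + mip (A' t) (A'' t)) +
        κ / 2 * (mip (A' t) (A t) + mip (A t) (A' t))
      = mip (A' t) (A'' t + κ • A t) := by
        rw [mip_add_right, mip_smul_right, mip_comm (A'' t), mip_comm (A t)]; ring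
    _ = 0 := by rw [hode, mip_smul_right, mip_comm, hcof, mul_zero]

theorem hasDerivAt_mip_apply_eq_zero (L : M2 →ₗ[ℝ] M2) (hskew : ∀ B, mip (L B) B = 0)
    (hcof : ∀ B, mip (L B) (cofm B) = 0) (hA : HasDerivAt A (A' t) t)
    (hA' : HasDerivAt A' (A'' t) t) (hode : A'' t + κ • A t = μ • cofm (A t)) :
    HasDerivAt (fun s => mip (L (A s)) (A' s)) 0 t := by
  refine ((hA.linearMap_comp L).mip hA').congr_deriv ?_
  rw [eq_sub_of_add_eq hode, mip_sub_right, mip_smul_right, mip_smul_right, hskew, hskew, hcof]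
  ring

theorem hasDerivAt_X2_eq_zero (hA : HasDerivAt A (A' t) t) (hA' : HasDerivAt A' (A'' t) t)
    (hode : A'' t + κ • A t = μ • cofm (A t)) :
    HasDerivAt (fun s => X2 (A s) (A' s)) 0 t := by
  have h := hasDerivAt_mip_apply_eq_zero (LinearMap.mulLeft ℝ Zm - LinearMap.mulRight ℝ Zm)
    (fun B => by simp [mip_sub_left, mip_mul_self_of_transpose_eq_neg Zm_transpose,
      mip_self_mul_of_transpose_eq_neg Zm_transpose])
    (fun B => by simp [mip_sub_left, mip_mul_left_cofm, mip_mul_right_cofm, trace_Zm]) hA hA' hode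
  exact (h.const_mul (1 / 2)).congr_deriv (mul_zero _)

theorem hasDerivAt_X3_eq_zero (hA : HasDerivAt A (A' t) t) (hA' : HasDerivAt A' (A'' t) t)
    (hode : A'' t + κ • A t = μ • cofm (A t)) :
    HasDerivAt (fun s => X3 (A s) (A' s)) 0 t := by
  have h := hasDerivAt_mip_apply_eq_zero (LinearMap.mulLeft ℝ Zm + LinearMap.mulRight ℝ Zm)
    (fun B => by simp [mip_add_left, mip_mul_self_of_transpose_eq_neg Zm_transpose,
      mip_self_mul_of_transpose_eq_neg Zm_transpose])
    (fun B => by simp [mip_add_left, mip_mul_left_cofm, mip_mul_right_cofm, trace_Zm]) hA hA' hode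
  exact (h.const_mul (1 / 2)).congr_deriv (mul_zero _)

end Solution

theorem invariants_conserved_general (κ : ℝ) (a b : ℝ)
    (A A' A'' : ℝ → M2) (lam : ℝ → ℝ)
    (hA : ∀ t ∈ Set.Ioo a b, HasDerivAt A (A' t) t)
    (hA' : ∀ t ∈ Set.Ioo a b, HasDerivAt A' (A'' t) t)
    (hdet : ∀ t ∈ Set.Ioo a b, (A t).det = 1)
    (hode : ∀ t ∈ Set.Ioo a b, A'' t + κ • A t = lam t • cofm (A t)) :
    ∀ s ∈ Set.Ioo a b, ∀ t ∈ Set.Ioo a b,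
      X1 κ (A s) (A' s) = X1 κ (A t) (A' t) ∧
      X2 (A s) (A' s) = X2 (A t) (A' t) ∧
      X3 (A s) (A' s) = X3 (A t) (A' t) := by
  have hdet_nhds (t : ℝ) (ht : t ∈ Ioo a b) : ∀ᶠ s in 𝓝 t, (A s).det = 1 :=
    Filter.eventually_of_mem (isOpen_Ioo.mem_nhds ht) hdet
  have hX1 (t : ℝ) (ht : t ∈ Ioo a b) : HasDerivAt (fun s => X1 κ (A s) (A' s)) 0 t :=
    hasDerivAt_X1_eq_zero (hA t ht) (hA' t ht) (hdet_nhds t ht) (hode t ht)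
  have hX2 (t : ℝ) (ht : t ∈ Ioo a b) : HasDerivAt (fun s => X2 (A s) (A' s)) 0 t :=
    hasDerivAt_X2_eq_zero (hA t ht) (hA' t ht) (hode t ht)
  have hX3 (t : ℝ) (ht : t ∈ Ioo a b) : HasDerivAt (fun s => X3 (A s) (A' s)) 0 t :=
    hasDerivAt_X3_eq_zero (hA t ht) (hA' t ht) (hode t ht)
  intro s hs t ht
  exact ⟨(eq_of_hasDerivAt_eq_zero_on_Ioo hX1 hs ht :),
    (eq_of_hasDerivAt_eq_zero_on_Ioo hX2 hs ht :), (eq_of_hasDerivAt_eq_zero_on_Ioo hX3 hs ht :)⟩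

/-- the quantities X₁, X₂, X₃ are invariant along solutions. -/
theorem invariants_conserved (κ : ℝ) (hκ : 0 ≤ κ) (a b : ℝ)
    (A A' A'' : ℝ → M2) (lam : ℝ → ℝ)
    (hA : ∀ t ∈ Set.Ioo a b, HasDerivAt A (A' t) t)
    (hA' : ∀ t ∈ Set.Ioo a b, HasDerivAt A' (A'' t) t)
    (hlam : ContinuousOn lam (Set.Ioo a b))
    (hdet : ∀ t ∈ Set.Ioo a b, (A t).det = 1)
    (hode : ∀ t ∈ Set.Ioo a b, A'' t + κ • A t = lam t • cofm (A t)) :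
    ∀ s ∈ Set.Ioo a b, ∀ t ∈ Set.Ioo a b,
      X1 κ (A s) (A' s) = X1 κ (A t) (A' t) ∧
      X2 (A s) (A' s) = X2 (A t) (A' t) ∧
      X3 (A s) (A' s) = X3 (A t) (A' t) :=
  invariants_conserved_general κ a b A A' A'' lam hA hA' hdet hode
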